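/- arXiv:1509.05388 — 2 statements merged into one kernel-verified Lean document; each statement's English description precedes it below -/
import Mathlib

section
/- There does not exist a 3-dimensional linear subspace V of ℝ⁵ such that for all v, w ∈ V and all real t, s, the determinant of the 2×2 matrix with rows (v₁+2v₃t+v₅s, w₁+2w₃t+w₅s) and (v₂+2v₄s+v₅t, w₂+2w₄s+w₅t) vanishes identically. -/
open Module

/-- A submodule of `Fin n → ℝ` on which all 2×2 coordinate minors vanish has rank ≤ 1. -/
lemma aux_finrank_le_one {n : ℕ} (S : Submodule ℝ (Fin n → ℝ))
    (h : ∀ x ∈ S, ∀ y ∈ S, ∀ i j, x i * y j = x j * y i) :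
    Module.finrank ℝ S ≤ 1 := by
  rcases eq_or_ne S ⊥ with rfl | hS
  · simp
  · obtain ⟨x, hxS, hx⟩ := Submodule.exists_mem_ne_zero_of_ne_bot hS
    obtain ⟨i, hi⟩ : ∃ i, x i ≠ 0 := by
      by_contra hc
      push_neg at hc
      exact hx (funext hc)
    have hle : S ≤ Submodule.span ℝ {x} := by
      intro y hy
      have hyx : y = (y i / x i) • x := by
        funext j
        have h1 := h x hxS y hy i j
        have : y j = y i / x i * x j := by
          field_simp
          linarith [h1]
        simpa using this
      rw [hyx]
      exact Submodule.smul_mem _ _ (Submodule.mem_span_singleton_self x)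
    calc Module.finrank ℝ S ≤ Module.finrank ℝ (Submodule.span ℝ {x}) :=
          Submodule.finrank_mono hle
      _ = 1 := finrank_span_singleton hx

/-- There is no 3-dimensional subspace `V ⊆ ℝ⁵` such that `Q_{v,w} ≡ 0` for all `v, w ∈ V`. -/
theorem stmt_0 :
    ¬ ∃ V : Submodule ℝ (Fin 5 → ℝ), Module.finrank ℝ V = 3 ∧
      ∀ v ∈ V, ∀ w ∈ V, ∀ t s : ℝ,
        (v 0 + 2 * v 2 * t + v 4 * s) * (w 1 + 2 * w 3 * s + w 4 * t)
          - (w 0 + 2 * w 2 * t + w 4 * s) * (v 1 + 2 * v 3 * s + v 4 * t) = 0 := by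
  rintro ⟨V, h3, hQ⟩
  have key : ∀ v ∈ V, ∀ w ∈ V,
      v 0 * w 1 = v 1 * w 0 ∧ v 2 * w 3 = v 3 * w 2 ∧
      v 2 * w 4 = v 4 * w 2 ∧ v 3 * w 4 = v 4 * w 3 := by
    intro v hv w hw
    have h00 := hQ v hv w hw 0 0
    have h10 := hQ v hv w hw 1 0
    have hm10 := hQ v hv w hw (-1) 0
    have h01 := hQ v hv w hw 0 1
    have h0m1 := hQ v hv w hw 0 (-1)
    have h11 := hQ v hv w hw 1 1
    refine ⟨by linear_combination h00,
      by linear_combination (h11 - h10 - h01 + h00) / 4,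
      by linear_combination (h10 + hm10 - 2 * h00) / 4,
      by linear_combination (-(h01 + h0m1 - 2 * h00)) / 4⟩
  -- projections
  let π1 : (Fin 5 → ℝ) →ₗ[ℝ] (Fin 2 → ℝ) :=
    LinearMap.pi (fun j : Fin 2 => LinearMap.proj (⟨j.val, by omega⟩ : Fin 5))
  let π2 : (Fin 5 → ℝ) →ₗ[ℝ] (Fin 3 → ℝ) :=
    LinearMap.pi (fun j : Fin 3 => LinearMap.proj (⟨j.val + 2, by omega⟩ : Fin 5))
  have hπ1 : ∀ (v : Fin 5 → ℝ) (j : Fin 2), π1 v j = v ⟨j.val, by omega⟩ := fun v j => rfl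
  have hπ2 : ∀ (v : Fin 5 → ℝ) (j : Fin 3), π2 v j = v ⟨j.val + 2, by omega⟩ := fun v j => rfl
  have h1 : Module.finrank ℝ (V.map π1) ≤ 1 := by
    apply aux_finrank_le_one
    rintro x ⟨v, hv, rfl⟩ y ⟨w, hw, rfl⟩ i j
    obtain ⟨k1, k2, k3, k4⟩ := key v hv w hw
    fin_cases i <;> fin_cases j <;> simp only [hπ1] <;>
      first
      | ring1
      | exact k1
      | exact k1.symm
  have h2 : Module.finrank ℝ (V.map π2) ≤ 1 := by
    apply aux_finrank_le_one
    rintro x ⟨v, hv, rfl⟩ y ⟨w, hw, rfl⟩ i j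
    obtain ⟨k1, k2, k3, k4⟩ := key v hv w hw
    fin_cases i <;> fin_cases j <;> simp only [hπ2] <;>
      first
      | ring1
      | exact k2
      | exact k2.symm
      | exact k3
      | exact k3.symm
      | exact k4
      | exact k4.symm
  -- injective map V → map π1 × map π2
  have hp1 : ∀ x ∈ V, π1 x ∈ V.map π1 := fun x hx => ⟨x, hx, rfl⟩
  have hp2 : ∀ x ∈ V, π2 x ∈ V.map π2 := fun x hx => ⟨x, hx, rfl⟩
  let g : V →ₗ[ℝ] ↥(V.map π1) × ↥(V.map π2) :=
    (π1.restrict hp1).prod (π2.restrict hp2)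
  have hg : Function.Injective g := by
    rw [← LinearMap.ker_eq_bot]
    ext ⟨v, hv⟩
    simp only [LinearMap.mem_ker, Submodule.mem_bot]
    constructor
    · intro hz
      have hz1 : π1 v = 0 := congrArg (fun p => (p.1 : Fin 2 → ℝ)) hz
      have hz2 : π2 v = 0 := congrArg (fun p => (p.2 : Fin 3 → ℝ)) hz
      have : v = 0 := by
        funext k
        fin_cases k
        · exact congrFun hz1 0
        · exact congrFun hz1 1
        · exact congrFun hz2 0
        · exact congrFun hz2 1
        · exact congrFun hz2 2
      exact Subtype.ext this
    · rintro h
      rw [h]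
      simp
  have hle := LinearMap.finrank_le_finrank_of_injective hg
  rw [Module.finrank_prod] at hle
  omega
end

section
/- There does not exist a 5-dimensional linear subspace V of ℝ⁹ such that for all v, w ∈ V, the polynomial Q_{v,w}(t,s) = det[[n₁(t,s)·v, n₁(t,s)·w],[n₂(t,s)·v, n₂(t,s)·w]] vanishes identically in (t,s) ∈ ℝ². -/
private lemma van4 {c0 c1 c2 c3 c4 : ℝ}
    (h : ∀ x : ℝ, c0 + c1*x + c2*x^2 + c3*x^3 + c4*x^4 = 0) :
    c0 = 0 ∧ c1 = 0 ∧ c2 = 0 ∧ c3 = 0 ∧ c4 = 0 := by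
  have h0 := h 0; have h1 := h 1; have h2 := h (-1); have h3 := h 2; have h4 := h (-2)
  refine ⟨by linarith, ?_, ?_, ?_, ?_⟩
  · linear_combination (2/3)*h1 - (2/3)*h2 - (1/12)*h3 + (1/12)*h4
  · linear_combination (-5/4)*h0 + (2/3)*h1 + (2/3)*h2 - (1/24)*h3 - (1/24)*h4
  · linear_combination (-1/6)*h1 + (1/6)*h2 + (1/12)*h3 - (1/12)*h4
  · linear_combination (1/4)*h0 - (1/6)*h1 - (1/6)*h2 + (1/24)*h3 + (1/24)*h4

private lemma keyhelp (V : Submodule ℝ (Fin 9 → ℝ)) (hd : Module.finrank ℝ V = 5)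
    (i1 i2 i3 i4 : Fin 9)
    (hz : ∀ z : V, (z : Fin 9 → ℝ) i1 = 0 → (z : Fin 9 → ℝ) i2 = 0 →
      (z : Fin 9 → ℝ) i3 = 0 → (z : Fin 9 → ℝ) i4 = 0 → z = 0) : False := by
  set L : V →ₗ[ℝ] (Fin 4 → ℝ) :=
    LinearMap.pi (fun j => (LinearMap.proj (![i1, i2, i3, i4] j)).comp V.subtype) with hL
  have hinj : Function.Injective L := by
    rw [← LinearMap.ker_eq_bot, LinearMap.ker_eq_bot']
    intro z hz0
    have hcomp : ∀ j : Fin 4, (z : Fin 9 → ℝ) (![i1, i2, i3, i4] j) = 0 := by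
      intro j
      have := congrFun hz0 j
      simpa [hL] using this
    have e1 := hcomp 0
    have e2 := hcomp 1
    have e3 := hcomp 2
    have e4 := hcomp 3
    simp only [Matrix.cons_val_zero, Matrix.cons_val_one, Matrix.head_cons,
      Matrix.cons_val_two, Matrix.tail_cons, Matrix.cons_val_three] at e1 e2 e3 e4
    exact hz z e1 e2 e3 e4
  have hle := LinearMap.finrank_le_finrank_of_injective hinj
  have h4 : Module.finrank ℝ (Fin 4 → ℝ) = 4 := by simp
  rw [hd, h4] at hle
  omega

/-- There is no 5-dimensional subspace `V ⊆ ℝ⁹` such that `Q_{v,w} ≡ 0` for all `v, w ∈ V`. -/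
theorem stmt_1 :
    ¬ ∃ V : Submodule ℝ (Fin 9 → ℝ), Module.finrank ℝ V = 5 ∧
      ∀ v ∈ V, ∀ w ∈ V, ∀ t s : ℝ,
        (v 0 + 2 * v 2 * t + v 4 * s + 3 * v 5 * t ^ 2 + 2 * v 7 * s * t + v 8 * s ^ 2) *
            (w 1 + 2 * w 3 * s + w 4 * t + 3 * w 6 * s ^ 2 + w 7 * t ^ 2 + 2 * w 8 * s * t)
          - (w 0 + 2 * w 2 * t + w 4 * s + 3 * w 5 * t ^ 2 + 2 * w 7 * s * t + w 8 * s ^ 2) *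
            (v 1 + 2 * v 3 * s + v 4 * t + 3 * v 6 * s ^ 2 + v 7 * t ^ 2 + 2 * v 8 * s * t) = 0 := by
  rintro ⟨V, hd, hQ⟩
  have hc : ∀ v ∈ V, ∀ w ∈ V,
      (v 0*w 7 + 2*v 2*w 4 + 3*v 5*w 1 - w 0*v 7 - 2*w 2*v 4 - 3*w 5*v 1 = 0) ∧
      (2*v 0*w 8 + 4*v 2*w 3 + v 4*w 4 + 2*v 7*w 1 - 2*w 0*v 8 - 4*w 2*v 3 - w 4*v 4 - 2*w 7*v 1 = 0) ∧
      (3*v 0*w 6 + 2*v 4*w 3 + v 8*w 1 - 3*w 0*v 6 - 2*w 4*v 3 - w 8*v 1 = 0) ∧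
      (2*v 2*w 7 + 3*v 5*w 4 - 2*w 2*v 7 - 3*w 5*v 4 = 0) ∧
      (4*v 2*w 8 + v 4*w 7 + 6*v 5*w 3 + 2*v 7*w 4 - 4*w 2*v 8 - w 4*v 7 - 6*w 5*v 3 - 2*w 7*v 4 = 0) ∧
      (6*v 2*w 6 + 2*v 4*w 8 + 4*v 7*w 3 + v 8*w 4 - 6*w 2*v 6 - 2*w 4*v 8 - 4*w 7*v 3 - w 8*v 4 = 0) ∧
      (3*v 4*w 6 + 2*v 8*w 3 - 3*w 4*v 6 - 2*w 8*v 3 = 0) ∧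
      (3*v 5*w 7 - 3*w 5*v 7 = 0) ∧
      (6*v 5*w 8 + 2*v 7*w 7 - 6*w 5*v 8 - 2*w 7*v 7 = 0) ∧
      (9*v 5*w 6 + 4*v 7*w 8 + v 8*w 7 - 9*w 5*v 6 - 4*w 7*v 8 - w 8*v 7 = 0) ∧
      (6*v 7*w 6 + 2*v 8*w 8 - 6*w 7*v 6 - 2*w 8*v 8 = 0) ∧
      (3*v 8*w 6 - 3*w 8*v 6 = 0) := by
    intro v hv w hw
    have hF : ∀ s t : ℝ, ((v 0*w 1 - w 0*v 1) + (2*v 0*w 3 + v 4*w 1 - 2*w 0*v 3 - w 4*v 1)*s + (3*v 0*w 6 + 2*v 4*w 3 + v 8*w 1 - 3*w 0*v 6 - 2*w 4*v 3 - w 8*v 1)*s^2 + (3*v 4*w 6 + 2*v 8*w 3 - 3*w 4*v 6 - 2*w 8*v 3)*s^3 + (3*v 8*w 6 - 3*w 8*v 6)*s^4) + ((v 0*w 4 + 2*v 2*w 1 - w 0*v 4 - 2*w 2*v 1) + (2*v 0*w 8 + 4*v 2*w 3 + v 4*w 4 + 2*v 7*w 1 - 2*w 0*v 8 - 4*w 2*v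 3 - w 4*v 4 - 2*w 7*v 1)*s + (6*v 2*w 6 + 2*v 4*w 8 + 4*v 7*w 3 + v 8*w 4 - 6*w 2*v 6 - 2*w 4*v 8 - 4*w 7*v 3 - w 8*v 4)*s^2 + (6*v 7*w 6 + 2*v 8*w 8 - 6*w 7*v 6 - 2*w 8*v 8)*s^3 + (0)*s^4)*t + ((v 0*w 7 + 2*v 2*w 4 + 3*v 5*w 1 - w 0*v 7 - 2*w 2*v 4 - 3*w 5*v 1) + (4*v 2*w 8 + v 4*w 7 + 6*v 5*w 3 + 2*v 7*w 4 - 4*w 2*v 8 - w 4*v 7 - 6*w 5*v 3 - 2*w 7*v 4)*s + (9*v 5*w 6 + 4*v 7*w 8 + v 8*w 7 - 9*w 5*v 6 - 4*w 7*v 8 - w 8*v 7)*s^2 + (0)*s^3 + (0)*s^4)*t^2 + ((2*v 2*w 7 + 3*v 5*w 4 - 2*w 2*v 7 - 3*w 5*v 4) + (6*v 5*w 8 + 2*v 7*w 7 - 6*w 5*v 8 - 2*w 7*v 7)*s + (0)*s^2 + (0)*s^3 + (0)*s^4)*t^3 + ((3*v 5*w 7 - 3*w 5*v 7) + (0)*s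 + (0)*s^2 + (0)*s^3 + (0)*s^4)*t^4 = 0 := by
      intro s t
      linear_combination hQ v hv w hw t s
    have hA := fun s => van4 (hF s)
    have h0 := van4 (fun s => (hA s).1)
    have h1 := van4 (fun s => (hA s).2.1)
    have h2 := van4 (fun s => (hA s).2.2.1)
    have h3 := van4 (fun s => (hA s).2.2.2.1)
    have h4 := van4 (fun s => (hA s).2.2.2.2)
    exact ⟨h2.1, h1.2.1, h0.2.2.1, h3.1, h2.2.1, h1.2.2.1, h0.2.2.2.1, h4.1, h3.2.1,
      h2.2.2.1, h1.2.2.2.1, h0.2.2.2.2⟩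
  by_cases h5 : ∀ u ∈ V, u 5 = 0
  · by_cases h6 : ∀ u ∈ V, u 6 = 0
    · by_cases h7 : ∀ u ∈ V, u 7 = 0
      · by_cases h8 : ∀ u ∈ V, u 8 = 0
        · by_cases h2c : ∀ u ∈ V, u 2 = 0
          · by_cases h3c : ∀ u ∈ V, u 3 = 0
            · -- branch 5c : everything zero except coords 0,1,4
              apply keyhelp V hd 0 1 4 4
              intro z hz0 hz1 hz4 _
              rw [← ZeroMemClass.coe_eq_zero]
              funext i
              have hz2 := h2c _ z.2
              have hz3 := h3c _ z.2
              have hz5 := h5 _ z.2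
              have hz6 := h6 _ z.2
              have hz7 := h7 _ z.2
              have hz8 := h8 _ z.2
              fin_cases i <;> simp only [Pi.zero_apply] <;> first | exact hz0 | exact hz1 | exact hz2 | exact hz3 | exact hz4 | exact hz5 | exact hz6 | exact hz7 | exact hz8
            · -- branch 5b : v 3 ≠ 0
              push_neg at h3c
              obtain ⟨v, hv, hv3⟩ := h3c
              apply keyhelp V hd 0 1 3 3
              intro z hz0 hz1 hz3 _
              obtain ⟨e20, e11, e02, e30, e21, e12, e03, e40, e31, e22, e13, e04⟩ :=
                hc v hv _ z.2
              have hz2 := h2c _ z.2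
              have hz5 := h5 _ z.2
              have hz6 := h6 _ z.2
              have hz7 := h7 _ z.2
              have hz8 := h8 _ z.2
              have hv8 := h8 _ hv
              have hz4 : (z : Fin 9 → ℝ) 4 = 0 := by
                rw [hz6, hz3, hz8, hz0, hz1] at e02
                have h' : v 3 * (z : Fin 9 → ℝ) 4 = 0 := by linear_combination -e02/2
                exact (mul_eq_zero.mp h').resolve_left hv3
              rw [← ZeroMemClass.coe_eq_zero]
              funext i
              fin_cases i <;> simp only [Pi.zero_apply] <;> first | exact hz0 | exact hz1 | exact hz2 | exact hz3 | exact hz4 | exact hz5 | exact hz6 | exact hz7 | exact hz8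
          · -- branch 5a : v 2 ≠ 0
            push_neg at h2c
            obtain ⟨v, hv, hv2⟩ := h2c
            apply keyhelp V hd 0 1 2 2
            intro z hz0 hz1 hz2 _
            obtain ⟨e20, e11, e02, e30, e21, e12, e03, e40, e31, e22, e13, e04⟩ :=
              hc v hv _ z.2
            have hz5 := h5 _ z.2
            have hz6 := h6 _ z.2
            have hz7 := h7 _ z.2
            have hz8 := h8 _ z.2
            have hv5 := h5 _ hv
            have hv7 := h7 _ hv
            have hv8 := h8 _ hv
            have hz4 : (z : Fin 9 → ℝ) 4 = 0 := by
              rw [hz7, hv5, hz0, hz2, hz5] at e20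
              have h' : v 2 * (z : Fin 9 → ℝ) 4 = 0 := by linear_combination e20/2
              exact (mul_eq_zero.mp h').resolve_left hv2
            have hz3 : (z : Fin 9 → ℝ) 3 = 0 := by
              rw [hz8, hv7, hz0, hz2, hz7] at e11
              have h' : v 2 * (z : Fin 9 → ℝ) 3 = 0 := by linear_combination e11/4
              exact (mul_eq_zero.mp h').resolve_left hv2
            rw [← ZeroMemClass.coe_eq_zero]
            funext i
            fin_cases i <;> simp only [Pi.zero_apply] <;> first | exact hz0 | exact hz1 | exact hz2 | exact hz3 | exact hz4 | exact hz5 | exact hz6 | exact hz7 | exact hz8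
        · -- branch 4 : v 8 ≠ 0, coords 5 6 7 vanish on V
          push_neg at h8
          obtain ⟨v, hv, hv8⟩ := h8
          apply keyhelp V hd 0 1 8 8
          intro z hz0 hz1 hz8 _
          obtain ⟨e20, e11, e02, e30, e21, e12, e03, e40, e31, e22, e13, e04⟩ :=
            hc v hv _ z.2
          have hz5 := h5 _ z.2
          have hz6 := h6 _ z.2
          have hz7 := h7 _ z.2
          have hv5 := h5 _ hv
          have hv6 := h6 _ hv
          have hv7 := h7 _ hv
          have hz3 : (z : Fin 9 → ℝ) 3 = 0 := by
            rw [hz6, hv6, hz8] at e03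
            have h' : v 8 * (z : Fin 9 → ℝ) 3 = 0 := by linear_combination e03/2
            exact (mul_eq_zero.mp h').resolve_left hv8
          have hz2 : (z : Fin 9 → ℝ) 2 = 0 := by
            rw [hz8, hz7, hv5, hv7, hz5] at e21
            have h' : v 8 * (z : Fin 9 → ℝ) 2 = 0 := by linear_combination -e21/4
            exact (mul_eq_zero.mp h').resolve_left hv8
          have hz4 : (z : Fin 9 → ℝ) 4 = 0 := by
            rw [hz6, hz8, hv6, hv7, hz7, hz2] at e12
            have h' : v 8 * (z : Fin 9 → ℝ) 4 = 0 := by linear_combination -e12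
            exact (mul_eq_zero.mp h').resolve_left hv8
          rw [← ZeroMemClass.coe_eq_zero]
          funext i
          fin_cases i <;> simp only [Pi.zero_apply] <;> first | exact hz0 | exact hz1 | exact hz2 | exact hz3 | exact hz4 | exact hz5 | exact hz6 | exact hz7 | exact hz8
      · -- branch 3 : v 7 ≠ 0, coords 5 6 vanish on V
        push_neg at h7
        obtain ⟨v, hv, hv7⟩ := h7
        apply keyhelp V hd 0 1 7 7
        intro z hz0 hz1 hz7 _
        obtain ⟨e20, e11, e02, e30, e21, e12, e03, e40, e31, e22, e13, e04⟩ :=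
          hc v hv _ z.2
        have hz5 := h5 _ z.2
        have hz6 := h6 _ z.2
        have hv5 := h5 _ hv
        have hv6 := h6 _ hv
        have hz8 : (z : Fin 9 → ℝ) 8 = 0 := by
          rw [hv5, hz6, hz7, hz5, hv6] at e22
          have h' : v 7 * (z : Fin 9 → ℝ) 8 = 0 := by linear_combination e22/3
          exact (mul_eq_zero.mp h').resolve_left hv7
        have hz2 : (z : Fin 9 → ℝ) 2 = 0 := by
          rw [hz7, hv5, hz5] at e30
          have h' : v 7 * (z : Fin 9 → ℝ) 2 = 0 := by linear_combination -e30/2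
          exact (mul_eq_zero.mp h').resolve_left hv7
        have hz4 : (z : Fin 9 → ℝ) 4 = 0 := by
          rw [hz8, hz7, hv5, hz2, hz5] at e21
          have h' : v 7 * (z : Fin 9 → ℝ) 4 = 0 := by linear_combination e21
          exact (mul_eq_zero.mp h').resolve_left hv7
        have hz3 : (z : Fin 9 → ℝ) 3 = 0 := by
          rw [hz6, hz8, hz2, hv6, hz7, hz4] at e12
          have h' : v 7 * (z : Fin 9 → ℝ) 3 = 0 := by linear_combination e12/4
          exact (mul_eq_zero.mp h').resolve_left hv7
        rw [← ZeroMemClass.coe_eq_zero]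
        funext i
        fin_cases i <;> simp only [Pi.zero_apply] <;> first | exact hz0 | exact hz1 | exact hz2 | exact hz3 | exact hz4 | exact hz5 | exact hz6 | exact hz7 | exact hz8
    · -- branch 2 : v 6 ≠ 0, coord 5 vanishes on V
      push_neg at h6
      obtain ⟨v, hv, hv6⟩ := h6
      apply keyhelp V hd 0 1 3 6
      intro z hz0 hz1 hz3 hz6
      obtain ⟨e20, e11, e02, e30, e21, e12, e03, e40, e31, e22, e13, e04⟩ :=
        hc v hv _ z.2
      have hz5 := h5 _ z.2
      have hv5 := h5 _ hv
      have hz7 : (z : Fin 9 → ℝ) 7 = 0 := by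
        rw [hz6] at e13
        have h' : v 6 * (z : Fin 9 → ℝ) 7 = 0 := by linear_combination -e13/6
        exact (mul_eq_zero.mp h').resolve_left hv6
      have hz8 : (z : Fin 9 → ℝ) 8 = 0 := by
        rw [hz6] at e04
        have h' : v 6 * (z : Fin 9 → ℝ) 8 = 0 := by linear_combination -e04/3
        exact (mul_eq_zero.mp h').resolve_left hv6
      have hz4 : (z : Fin 9 → ℝ) 4 = 0 := by
        rw [hz6, hz3, hz8] at e03
        have h' : v 6 * (z : Fin 9 → ℝ) 4 = 0 := by linear_combination -e03/3
        exact (mul_eq_zero.mp h').resolve_left hv6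
      have hz2 : (z : Fin 9 → ℝ) 2 = 0 := by
        rw [hz6, hz8, hz3, hz4, hz7] at e12
        have h' : v 6 * (z : Fin 9 → ℝ) 2 = 0 := by linear_combination -e12/6
        exact (mul_eq_zero.mp h').resolve_left hv6
      rw [← ZeroMemClass.coe_eq_zero]
      funext i
      fin_cases i <;> simp only [Pi.zero_apply] <;> first | exact hz0 | exact hz1 | exact hz2 | exact hz3 | exact hz4 | exact hz5 | exact hz6 | exact hz7 | exact hz8
  · -- branch 1 : v 5 ≠ 0
    push_neg at h5
    obtain ⟨v, hv, hv5⟩ := h5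
    apply keyhelp V hd 0 1 2 5
    intro z hz0 hz1 hz2 hz5
    obtain ⟨e20, e11, e02, e30, e21, e12, e03, e40, e31, e22, e13, e04⟩ :=
      hc v hv _ z.2
    have hz7 : (z : Fin 9 → ℝ) 7 = 0 := by
      rw [hz5] at e40
      have h' : v 5 * (z : Fin 9 → ℝ) 7 = 0 := by linear_combination e40/3
      exact (mul_eq_zero.mp h').resolve_left hv5
    have hz8 : (z : Fin 9 → ℝ) 8 = 0 := by
      rw [hz5] at e31
      have h' : v 5 * (z : Fin 9 → ℝ) 8 = 0 := by linear_combination e31/6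
      exact (mul_eq_zero.mp h').resolve_left hv5
    have hz6 : (z : Fin 9 → ℝ) 6 = 0 := by
      rw [hz5, hz7, hz8] at e22
      have h' : v 5 * (z : Fin 9 → ℝ) 6 = 0 := by linear_combination e22/9
      exact (mul_eq_zero.mp h').resolve_left hv5
    have hz4 : (z : Fin 9 → ℝ) 4 = 0 := by
      rw [hz7, hz2, hz5] at e30
      have h' : v 5 * (z : Fin 9 → ℝ) 4 = 0 := by linear_combination e30/3
      exact (mul_eq_zero.mp h').resolve_left hv5
    have hz3 : (z : Fin 9 → ℝ) 3 = 0 := by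
      rw [hz8, hz7, hz2, hz5, hz4] at e21
      have h' : v 5 * (z : Fin 9 → ℝ) 3 = 0 := by linear_combination e21/6
      exact (mul_eq_zero.mp h').resolve_left hv5
    rw [← ZeroMemClass.coe_eq_zero]
    funext i
    fin_cases i <;> simp only [Pi.zero_apply] <;> first | exact hz0 | exact hz1 | exact hz2 | exact hz3 | exact hz4 | exact hz5 | exact hz6 | exact hz7 | exact hz8
end
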